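/- Define the topological degree of a monomial by deg(τᵢ) = 2^{i+1} − 1 and deg(ξᵢ) = 2^{i+1} − 2, extended additively, and for t ≥ 0 let F^t ⊆ 𝒜 be the k-submodule spanned by the basis monomials τ^E ξ^R (all e_s ∈ {0,1}) of topological degree ≥ t. Let ε : 𝒜 → k be the k-algebra homomorphism sending every τᵢ and every ξᵢ to 0. Then F^1 = ker(ε), and F^t · F^1 ⊆ F^{t+1} for every t ≥ 0. (The key step in the paper's proof that the monomials also form a right H-module basis.) -/

import Mathlib

/-!
In `𝒜` the relation `τᵢ² = τ·ξ_{i+1} + ρ·τ_{i+1} + ρ·τ₀·ξ_{i+1}` never lowers the topological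
degree: `deg τᵢ² = deg ξ_{i+1}`, while `τ_{i+1}` and `τ₀ξ_{i+1}` have larger degree. Reducing an
arbitrary monomial `τ^E ξ^R` to the basis, by induction on the number of `τ`s, therefore stays
in `F^{deg}`; hence `F^s · F^t ⊆ F^{s+t}` and `F^0 = 𝒜`. The only basis monomial of degree `0` is
`1`, and `ε` kills all others, so `𝒜 = F^1 + k·1` with `F^1 ⊆ ker ε`, which forces `F^1 = ker ε`.
-/

open MvPolynomial TensorProduct

noncomputable section

/-- Variables of the dual motivic Steenrod algebra: `.inl i` is `τᵢ`, `.inr i` is `ξ_{i+1}`. -/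
abbrev MotVar : Type := ℕ ⊕ ℕ

variable (k : Type) [CommRing k]

/-- `τᵢ` as a polynomial generator. -/
def tP (i : ℕ) : MvPolynomial MotVar k := X (Sum.inl i)

/-- `ξᵢ` as a polynomial generator, with the convention `ξ₀ = 1`. -/
def xP : ℕ → MvPolynomial MotVar k
  | 0 => 1
  | i + 1 => X (Sum.inr i)

variable (τ ρ : k)

/-- The ideal of defining relations `τᵢ² = τ·ξ_{i+1} + ρ·τ_{i+1} + ρ·τ₀·ξ_{i+1}`. -/
def relIdeal : Ideal (MvPolynomial MotVar k) :=
  Ideal.span (Set.range fun i : ℕ =>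
    tP k i ^ 2 - (C τ * xP k (i + 1) + C ρ * tP k (i + 1) + C ρ * tP k 0 * xP k (i + 1)))

/-- The mod 2 dual motivic Steenrod algebra over `k` (with `H_{*,*}` replaced by `k`). -/
abbrev DSA : Type := MvPolynomial MotVar k ⧸ relIdeal k τ ρ

/-- The canonical projection onto the dual Steenrod algebra. -/
def mkDSA : MvPolynomial MotVar k →+* DSA k τ ρ := Ideal.Quotient.mk _

/-- The monomial `τ^E ξ^R`, where `R i` records the exponent `r_{i+1}` of `ξ_{i+1}`. -/
def monP (E R : ℕ →₀ ℕ) : MvPolynomial MotVar k :=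
  (E.prod fun i e => tP k i ^ e) * (R.prod fun i r => xP k (i + 1) ^ r)

/-- The topological degree of the monomial `τ^E ξ^R`:
`deg τᵢ = 2^(i+1) - 1` and `deg ξ_{i+1} = 2^(i+2) - 2`. -/
def mdeg (E R : ℕ →₀ ℕ) : ℕ :=
  E.sum (fun i e => e * (2 ^ (i + 1) - 1)) + R.sum (fun i r => r * (2 ^ (i + 2) - 2))

/-- The filtration `F^t ⊆ 𝒜`: the `k`-span of the basis monomials of topological
degree at least `t`. -/
def Filt (t : ℕ) : Submodule k (DSA k τ ρ) :=
  Submodule.span k {x | ∃ E R : ℕ →₀ ℕ, (∀ s, E s ≤ 1) ∧ t ≤ mdeg E R ∧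
    x = mkDSA k τ ρ (monP k E R)}

section Monomials

variable {k}

open Finsupp

theorem mdeg_eq_weight (E R : ℕ →₀ ℕ) :
    mdeg E R = weight (fun i => 2 ^ (i + 1) - 1) E + weight (fun i => 2 ^ (i + 2) - 2) R := by
  simp only [mdeg, weight_apply, smul_eq_mul]

theorem mdeg_add (E R E' R' : ℕ →₀ ℕ) :
    mdeg (E + E') (R + R') = mdeg E R + mdeg E' R' := by
  simp only [mdeg_eq_weight, map_add]
  ring

theorem one_le_mdeg {E R : ℕ →₀ ℕ} (h : E ≠ 0 ∨ R ≠ 0) : 1 ≤ mdeg E R := by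
  rw [mdeg_eq_weight]
  rcases h with h | h <;> obtain ⟨j, hj⟩ := Finsupp.ne_iff.mp h
  · have := le_weight_of_ne_zero' (fun i => 2 ^ (i + 1) - 1) hj
    have : 2 ≤ 2 ^ (j + 1) := Nat.le_self_pow (by omega) 2
    omega
  · have := le_weight_of_ne_zero' (fun i => 2 ^ (i + 2) - 2) hj
    have : 2 ^ 2 ≤ 2 ^ (j + 2) := Nat.pow_le_pow_right two_pos (by omega)
    omega

theorem monP_add (E R E' R' : ℕ →₀ ℕ) :
    monP k (E + E') (R + R') = monP k E R * monP k E' R' := by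
  simp only [monP, prod_add_index' (fun _ => pow_zero _) (fun _ _ _ => pow_add _ _ _)]
  ring

theorem monP_single_zero (i m : ℕ) : monP k (single i m) 0 = tP k i ^ m := by
  simp [monP]

theorem monP_zero_single (i m : ℕ) : monP k 0 (single i m) = xP k (i + 1) ^ m := by
  simp [monP]

theorem monP_zero_zero : monP k 0 0 = 1 := by
  simp [monP]

theorem exists_X_eq_monP (v : MotVar) : ∃ E R, (X v : MvPolynomial MotVar k) = monP k E R := by
  rcases v with i | i
  · exact ⟨single i 1, 0, by rw [monP_single_zero, pow_one, tP]⟩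
  · exact ⟨0, single i 1, by rw [monP_zero_single, pow_one, xP]⟩

theorem map_monP_eq_zero {S : Type*} [CommSemiring S] (φ : MvPolynomial MotVar k →+* S)
    (hτ : ∀ i, φ (tP k i) = 0) (hξ : ∀ i, φ (xP k (i + 1)) = 0) {E R : ℕ →₀ ℕ}
    (h : E ≠ 0 ∨ R ≠ 0) : φ (monP k E R) = 0 := by
  rw [monP, map_mul, map_finsuppProd, map_finsuppProd]
  rcases h with h | h <;> obtain ⟨j, hj⟩ := Finsupp.ne_iff.mp h
  · refine mul_eq_zero_of_left (Finset.prod_eq_zero (mem_support_iff.mpr hj) ?_) _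
    beta_reduce; rw [map_pow, hτ, zero_pow hj]
  · refine mul_eq_zero_of_right _ (Finset.prod_eq_zero (mem_support_iff.mpr hj) ?_)
    beta_reduce; rw [map_pow, hξ, zero_pow hj]

end Monomials

section Filtration

variable {k τ ρ}

open Finsupp

theorem mkDSA_C_mul (a : k) (p : MvPolynomial MotVar k) :
    mkDSA k τ ρ (C a * p) = a • mkDSA k τ ρ p := by
  rw [← smul_eq_C_mul]
  exact map_smul (Ideal.Quotient.mkₐ k (relIdeal k τ ρ)) a p

theorem mkDSA_tP_sq (i : ℕ) :
    mkDSA k τ ρ (monP k (single i 2) 0) =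
      τ • mkDSA k τ ρ (monP k 0 (single i 1)) + ρ • mkDSA k τ ρ (monP k (single (i + 1) 1) 0) +
        ρ • mkDSA k τ ρ (monP k (single 0 1) (single i 1)) := by
  have h0i : monP k (single 0 1) (single i 1) = tP k 0 * xP k (i + 1) := by
    simpa [monP_single_zero, monP_zero_single] using monP_add (k := k) (single 0 1) 0 0 (single i 1)
  simp only [h0i, monP_single_zero, monP_zero_single, pow_one, ← mkDSA_C_mul, ← map_add]
  exact Ideal.Quotient.eq.mpr (Ideal.subset_span ⟨i, by ring⟩)

theorem Filt_antitone : Antitone (Filt k τ ρ) := fun _ _ h =>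
  Submodule.span_mono fun _ ⟨E, R, hE, ht, hx⟩ => ⟨E, R, hE, h.trans ht, hx⟩

theorem mkDSA_monP_mem_Filt (E R : ℕ →₀ ℕ) :
    mkDSA k τ ρ (monP k E R) ∈ Filt k τ ρ (mdeg E R) := by
  induction hn : E.degree using Nat.strong_induction_on generalizing E R with
  | _ n ih =>
  by_cases hE : ∀ s, E s ≤ 1
  · exact Submodule.subset_span ⟨E, R, hE, le_rfl, rfl⟩
  push Not at hE
  obtain ⟨i, hi⟩ := hE
  obtain ⟨E', rfl⟩ : ∃ E', E = E' + single i 2 :=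
    ⟨E - single i 2, (tsub_add_cancel_of_le (single_le_iff.mpr hi)).symm⟩
  have hsplit := monP_add (k := k) E' R (single i 2) 0
  have hdeg := mdeg_add E' R (single i 2) 0
  rw [add_zero] at hsplit hdeg
  have hterm : ∀ E₁ R₁, E₁.degree ≤ 1 → mdeg (single i 2) 0 ≤ mdeg E₁ R₁ →
      mkDSA k τ ρ (monP k E' R) * mkDSA k τ ρ (monP k E₁ R₁) ∈
        Filt k τ ρ (mdeg E' R + mdeg (single i 2) 0) := by
    intro E₁ R₁ hE₁ hR₁
    rw [← map_mul, ← monP_add]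
    refine Filt_antitone ?_ (ih _ ?_ _ _ rfl)
    · rw [mdeg_add]; omega
    · rw [← hn, map_add, map_add, degree_single]; omega
  rw [hsplit, hdeg, map_mul, mkDSA_tP_sq, mul_add, mul_add, mul_smul_comm, mul_smul_comm,
    mul_smul_comm]
  refine add_mem (add_mem ?_ ?_) ?_ <;> refine Submodule.smul_mem _ _ (hterm _ _ (by simp) ?_) <;>
    simp only [mdeg_eq_weight, weight_single, map_zero, smul_eq_mul, pow_succ] <;> omega

theorem Filt_mul_le (t s : ℕ) : Filt k τ ρ t * Filt k τ ρ s ≤ Filt k τ ρ (t + s) := by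
  rw [Filt, Filt, Submodule.span_mul_span, Submodule.span_le]
  rintro _ ⟨_, ⟨E, R, -, ht, rfl⟩, _, ⟨E', R', -, hs, rfl⟩, rfl⟩
  beta_reduce
  rw [← map_mul, ← monP_add]
  exact Filt_antitone (by rw [mdeg_add]; omega) (mkDSA_monP_mem_Filt _ _)

theorem Filt_zero_eq_top : Filt k τ ρ 0 = ⊤ := by
  rw [eq_top_iff]
  rintro x -
  obtain ⟨p, rfl⟩ := Ideal.Quotient.mk_surjective x
  change mkDSA k τ ρ p ∈ _
  induction p using MvPolynomial.induction_on with
  | C a =>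
    rw [← mul_one (C a), mkDSA_C_mul, ← monP_zero_zero]
    exact Submodule.smul_mem _ _ (Filt_antitone (Nat.zero_le _) (mkDSA_monP_mem_Filt 0 0))
  | add p q hp hq => rw [map_add]; exact add_mem hp hq
  | mul_X p v hp =>
    obtain ⟨E, R, hv⟩ := exists_X_eq_monP (k := k) v
    rw [hv, map_mul]
    exact Filt_antitone (Nat.zero_le _)
      (Filt_mul_le 0 _ (Submodule.mul_mem_mul hp (mkDSA_monP_mem_Filt E R)))

theorem Filt_zero_le_Filt_one_sup : Filt k τ ρ 0 ≤ Filt k τ ρ 1 ⊔ k ∙ 1 := by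
  refine Submodule.span_le.mpr ?_
  rintro _ ⟨E, R, hE, -, rfl⟩
  by_cases h : E = 0 ∧ R = 0
  · obtain ⟨rfl, rfl⟩ := h
    rw [monP_zero_zero, map_one]
    exact Submodule.mem_sup_right (Submodule.mem_span_singleton_self 1)
  · exact Submodule.mem_sup_left
      (Submodule.subset_span ⟨E, R, hE, one_le_mdeg (not_and_or.mp h), rfl⟩)

section Augmentation

variable {ε : DSA k τ ρ →ₐ[k] k} (hτ : ∀ i, ε (mkDSA k τ ρ (tP k i)) = 0)
  (hξ : ∀ i, ε (mkDSA k τ ρ (xP k (i + 1))) = 0)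
include hτ hξ

theorem Filt_one_le_ker : Filt k τ ρ 1 ≤ LinearMap.ker ε.toLinearMap := by
  refine Submodule.span_le.mpr ?_
  rintro _ ⟨E, R, -, hdeg, rfl⟩
  have hER : E ≠ 0 ∨ R ≠ 0 := by
    by_contra! h
    simp [h.1, h.2, mdeg_eq_weight] at hdeg
  exact map_monP_eq_zero ((ε : DSA k τ ρ →+* k).comp (mkDSA k τ ρ)) hτ hξ hER

theorem mem_Filt_one_iff (x : DSA k τ ρ) : x ∈ Filt k τ ρ 1 ↔ ε x = 0 := by
  refine ⟨fun hx => Filt_one_le_ker hτ hξ hx, fun hx => ?_⟩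
  have hx0 : x ∈ Filt k τ ρ 0 := by simp [Filt_zero_eq_top]
  obtain ⟨y, hy, z, hz, rfl⟩ := Submodule.mem_sup.mp (Filt_zero_le_Filt_one_sup hx0)
  obtain ⟨c, rfl⟩ := Submodule.mem_span_singleton.mp hz
  have hy0 : ε y = 0 := Filt_one_le_ker hτ hξ hy
  have hc : c = 0 := by simpa [hy0] using hx
  simpa [hc] using hy

end Augmentation

end Filtration

theorem statement1 (k : Type) [CommRing k] (τ ρ : k)
    (ε : DSA k τ ρ →ₐ[k] k)
    (hτ : ∀ i : ℕ, ε (mkDSA k τ ρ (tP k i)) = 0)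
    (hξ : ∀ i : ℕ, 1 ≤ i → ε (mkDSA k τ ρ (xP k i)) = 0) :
    (∀ x : DSA k τ ρ, x ∈ Filt k τ ρ 1 ↔ ε x = 0) ∧
      (∀ t : ℕ, Filt k τ ρ t * Filt k τ ρ 1 ≤ Filt k τ ρ (t + 1)) :=
  ⟨mem_Filt_one_iff hτ fun i => hξ (i + 1) i.succ_pos, fun t => Filt_mul_le t 1⟩

end
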